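/- Let λ ≥ 1, and let Y have density f(y) = e^{-(1/2)|y|^λ}/(2^{1+1/λ}Γ(1+1/λ)). Let d_θ₂(y) = -(1/2){|y|^λ log|y| - (2/λ²)ν} with ν = log 2 + ψ(1+1/λ), and d_σ(y) = (λ/2)|y|^λ - 1. Then E[d_θ₂(Y)·d_σ(Y)] = -(1+ν)/λ. -/

import Mathlib

/-!
Both scores and the density depend on `y` only through `|y|`, so the expectation is twice an
integral over `(0, ∞)` of a combination of `x ^ q * exp (-x ^ λ / 2)` and
`x ^ q * log x * exp (-x ^ λ / 2)`. The substitution `u = b x ^ p` turns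
`∫ x ^ q * log x * exp (-b * x ^ p)` into a multiple of `Γ'(s) - log b * Γ(s)` with
`s = (q + 1) / p`, where `Γ'(s) = ∫ t ^ (s - 1) * log t * exp (-t)` is the derivative of
Euler's integral. With `Γ' = ψ Γ` and the recurrences `Γ(s + 1) = s Γ(s)`,
`ψ(s + 1) = ψ(s) + 1 / s`, every term becomes a multiple of `Γ(1 + 1/λ)` that is affine in
`ψ(1 + 1/λ)`, and the normalising constant cancels.
-/

open MeasureTheory Real

/-- The standardized exponential power density (APD with `θ₁ = 1/2`, `θ₂ = l`). -/
noncomputable def epdDensity (l y : ℝ) : ℝ :=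
  Real.exp (-(1 / 2) * |y| ^ l) / ((2 : ℝ) ^ (1 + 1 / l) * Real.Gamma (1 + 1 / l))

/-- The digamma function `ψ(x) = (log ∘ Γ)'(x)`. -/
noncomputable def digamma (x : ℝ) : ℝ :=
  deriv (fun y : ℝ => Real.log (Real.Gamma y)) x

/-- The trigamma function `ψ'`. -/
noncomputable def trigamma (x : ℝ) : ℝ :=
  deriv digamma x

/-- The score component `d_{θ₂}` evaluated at the null `θ₀ = (1/2, l)`. -/
noncomputable def dTheta2 (l y : ℝ) : ℝ :=
  -(1 / 2) * (|y| ^ l * Real.log |y| - (2 / l ^ 2) * (Real.log 2 + digamma (1 + 1 / l)))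

/-- The score component `d_σ`. -/
noncomputable def dSigma (l y : ℝ) : ℝ :=
  (l / 2) * |y| ^ l - 1

open Set

lemma abs_log_le_rpow_add_rpow_neg_div {x ε : ℝ} (hx : 0 < x) (hε : 0 < ε) :
    |log x| ≤ (x ^ ε + x ^ (-ε)) / ε := by
  have hpos : log x ≤ x ^ ε / ε := log_le_rpow_div hx.le hε
  have hneg : log x⁻¹ ≤ x⁻¹ ^ ε / ε := log_le_rpow_div (inv_nonneg.mpr hx.le) hε
  rw [log_inv, inv_rpow hx.le, ← rpow_neg hx.le] at hneg
  rw [abs_le, add_div]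
  constructor <;> linarith [(rpow_pos_of_pos hx ε).le, (rpow_pos_of_pos hx (-ε)).le,
    div_nonneg (rpow_pos_of_pos hx ε).le hε.le, div_nonneg (rpow_pos_of_pos hx (-ε)).le hε.le]

lemma integrableOn_rpow_mul_log_mul_exp_neg_mul_rpow {p q b : ℝ} (hq : -1 < q) (hp : 0 < p)
    (hb : 0 < b) :
    IntegrableOn (fun x : ℝ => x ^ q * log x * exp (-b * x ^ p)) (Ioi 0) := by
  set ε := (q + 1) / 2 with hε_def
  have hε : 0 < ε := by linarith
  have hbound := ((integrableOn_rpow_mul_exp_neg_mul_rpow (s := q + ε) (by linarith) hp hb).add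
    (integrableOn_rpow_mul_exp_neg_mul_rpow (s := q - ε) (by linarith) hp hb)).div_const ε
  refine hbound.mono' (by fun_prop) ?_
  filter_upwards [ae_restrict_mem measurableSet_Ioi] with x (hx : 0 < x)
  have hxq := rpow_pos_of_pos hx q
  calc ‖x ^ q * log x * exp (-b * x ^ p)‖ = x ^ q * |log x| * exp (-b * x ^ p) := by
        rw [norm_mul, norm_mul, Real.norm_of_nonneg hxq.le, Real.norm_eq_abs,
          Real.norm_of_nonneg (exp_pos _).le]
    _ ≤ x ^ q * ((x ^ ε + x ^ (-ε)) / ε) * exp (-b * x ^ p) := by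
        gcongr; exact abs_log_le_rpow_add_rpow_neg_div hx hε
    _ = (x ^ (q + ε) * exp (-b * x ^ p) + x ^ (q - ε) * exp (-b * x ^ p)) / ε := by
        rw [rpow_add hx, sub_eq_add_neg, rpow_add hx]; ring

lemma hasDerivAt_Gamma_eq_integral {s : ℝ} (hs : 0 < s) :
    HasDerivAt Gamma (∫ t in Ioi (0 : ℝ), t ^ (s - 1) * log t * exp (-t)) s := by
  have hs' : 0 < (s : ℂ).re := by simpa using hs
  have hC : HasDerivAt Complex.Gamma
      (∫ t : ℝ in Ioi 0, (t : ℂ) ^ ((s : ℂ) - 1) * (log t * exp (-t))) s := by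
    refine (Complex.hasDerivAt_GammaIntegral hs').congr_of_eventuallyEq ?_
    filter_upwards [(isOpen_lt continuous_const Complex.continuous_re).mem_nhds hs'] with z hz
    exact Complex.Gamma_eq_integral hz
  have hI : (∫ t : ℝ in Ioi 0, (t : ℂ) ^ ((s : ℂ) - 1) * (log t * exp (-t)))
      = ((∫ t in Ioi (0 : ℝ), t ^ (s - 1) * log t * exp (-t) : ℝ) : ℂ) := by
    rw [← integral_complex_ofReal]
    refine setIntegral_congr_fun measurableSet_Ioi fun t (ht : 0 < t) => ?_
    rw [← Complex.ofReal_one, ← Complex.ofReal_sub, ← Complex.ofReal_cpow ht.le]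
    push_cast
    ring
  have hR := hC.real_of_complex
  rw [hI, Complex.ofReal_re] at hR
  simpa only [Complex.Gamma_ofReal, Complex.ofReal_re] using hR

lemma hasDerivAt_log_Gamma {x : ℝ} (hx : 0 < x) :
    HasDerivAt (fun y => log (Gamma y)) (deriv Gamma x / Gamma x) x :=
  (differentiableOn_Gamma_Ioi.differentiableAt (Ioi_mem_nhds hx)).hasDerivAt.log
    (Gamma_pos_of_pos hx).ne'

lemma digamma_eq_deriv_Gamma_div {x : ℝ} (hx : 0 < x) : digamma x = deriv Gamma x / Gamma x :=
  (hasDerivAt_log_Gamma hx).deriv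

lemma digamma_add_one {x : ℝ} (hx : 0 < x) : digamma (x + 1) = digamma x + x⁻¹ := by
  have hlogGamma := hasDerivAt_log_Gamma hx
  rw [← digamma_eq_deriv_Gamma_div hx] at hlogGamma
  have hshift : (fun y => log (Gamma (y + 1))) =ᶠ[nhds x] fun y => log y + log (Gamma y) := by
    filter_upwards [Ioi_mem_nhds hx] with y (hy : 0 < y)
    rw [Gamma_add_one hy.ne', log_mul hy.ne' (Gamma_pos_of_pos hy).ne']
  rw [digamma, ← deriv_comp_add_const, hshift.deriv_eq, add_comm]
  exact ((hasDerivAt_log hx.ne').add hlogGamma).deriv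

lemma integral_rpow_sub_one_mul_log_mul_exp_neg_mul {s b : ℝ} (hs : 0 < s) (hb : 0 < b) :
    ∫ t in Ioi (0 : ℝ), t ^ (s - 1) * log t * exp (-b * t)
      = b ^ (-s) * Gamma s * (digamma s - log b) := by
  have hpow : IntegrableOn (fun t : ℝ => t ^ (s - 1) * exp (-b * t)) (Ioi 0) := by
    simpa using integrableOn_rpow_mul_exp_neg_mul_rpow (p := 1) (by linarith) one_pos hb
  have hlog : IntegrableOn (fun t : ℝ => t ^ (s - 1) * log t * exp (-b * t)) (Ioi 0) := by
    simpa using integrableOn_rpow_mul_log_mul_exp_neg_mul_rpow (p := 1) (by linarith) one_pos hb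
  have hGamma : ∫ t in Ioi (0 : ℝ), t ^ (s - 1) * exp (-b * t) = b ^ (-s) * Gamma s := by
    simp_rw [neg_mul]
    rw [integral_rpow_mul_exp_neg_mul_Ioi hs hb, one_div, inv_rpow hb.le, rpow_neg hb.le]
  have hscale := integral_comp_mul_left_Ioi (fun u => u ^ (s - 1) * log u * exp (-u)) 0 hb
  rw [mul_zero, ← (hasDerivAt_Gamma_eq_integral hs).deriv, smul_eq_mul] at hscale
  have hsplit : ∫ t in Ioi (0 : ℝ), (b * t) ^ (s - 1) * log (b * t) * exp (-(b * t))
      = ∫ t in Ioi (0 : ℝ), b ^ (s - 1) * (t ^ (s - 1) * log t * exp (-b * t)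
          + log b * (t ^ (s - 1) * exp (-b * t))) := by
    refine setIntegral_congr_fun measurableSet_Ioi fun t (ht : 0 < t) => ?_
    rw [mul_rpow hb.le ht.le, log_mul hb.ne' ht.ne', neg_mul]
    ring
  rw [hsplit, integral_const_mul, integral_add hlog (hpow.const_mul _), integral_const_mul,
    hGamma] at hscale
  have hbs : b ^ (-s) = (b ^ (s - 1))⁻¹ * b⁻¹ := by
    rw [← mul_inv, ← rpow_add_one hb.ne', sub_add_cancel, rpow_neg hb.le]
  have hGamma_pos := Gamma_pos_of_pos hs
  have hbpos := rpow_pos_of_pos hb (s - 1)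
  rw [hbs] at hscale ⊢
  rw [← eq_inv_mul_iff_mul_eq₀ hbpos.ne', ← eq_sub_iff_add_eq] at hscale
  rw [hscale, digamma_eq_deriv_Gamma_div hs]
  field_simp

lemma integral_rpow_mul_log_mul_exp_neg_mul_rpow {p q b : ℝ} (hp : 0 < p) (hq : -1 < q)
    (hb : 0 < b) :
    ∫ x in Ioi (0 : ℝ), x ^ q * log x * exp (-b * x ^ p) =
      b ^ (-(q + 1) / p) * (1 / p) * Gamma ((q + 1) / p) *
        ((digamma ((q + 1) / p) - log b) / p) := by
  set s := (q + 1) / p with hs_def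
  have hs : 0 < s := div_pos (by linarith) hp
  rw [← integral_comp_rpow_Ioi _ (one_div_ne_zero hp.ne')]
  have hsubst : ∫ x in Ioi (0 : ℝ), (|1 / p| * x ^ (1 / p - 1)) •
        ((x ^ (1 / p)) ^ q * log (x ^ (1 / p)) * exp (-b * (x ^ (1 / p)) ^ p))
      = ∫ x in Ioi (0 : ℝ), (1 / p ^ 2) * (x ^ (s - 1) * log x * exp (-b * x)) := by
    refine setIntegral_congr_fun measurableSet_Ioi fun x (hx : 0 < x) => ?_
    have hexp : x ^ (1 / p - 1) * (x ^ (1 / p)) ^ q = x ^ (s - 1) := by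
      rw [← rpow_mul hx.le, ← rpow_add hx, hs_def]
      congr 1
      field_simp
      ring
    rw [← rpow_mul hx.le (1 / p) p, one_div_mul_cancel hp.ne', rpow_one, log_rpow hx,
      abs_of_pos (one_div_pos.mpr hp), smul_eq_mul, ← hexp]
    ring
  rw [hsubst, integral_const_mul, integral_rpow_sub_one_mul_log_mul_exp_neg_mul hs hb,
    neg_div]
  ring

lemma one_div_two_rpow_neg (x : ℝ) : (1 / 2 : ℝ) ^ (-x) = 2 ^ x := by
  rw [rpow_neg (by norm_num), one_div, inv_rpow (by norm_num), inv_inv]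

section Moments

variable {l : ℝ}

lemma integral_exp_neg_half_mul_rpow (hl : 0 < l) :
    ∫ x in Ioi (0 : ℝ), exp (-(1 / 2) * x ^ l) = 2 ^ (1 + 1 / l) * Gamma (1 + 1 / l) / 2 := by
  rw [integral_exp_neg_mul_rpow hl (by norm_num), neg_div, one_div_two_rpow_neg, add_comm,
    rpow_add two_pos, rpow_one]
  ring

lemma integral_rpow_mul_exp_neg_half_mul_rpow (hl : 0 < l) :
    ∫ x in Ioi (0 : ℝ), x ^ l * exp (-(1 / 2) * x ^ l) =
      2 ^ (1 + 1 / l) * Gamma (1 + 1 / l) / l := by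
  rw [integral_rpow_mul_exp_neg_mul_rpow hl (by linarith) (by norm_num), neg_div,
    one_div_two_rpow_neg, show (l + 1) / l = 1 + 1 / l by field_simp]
  ring

lemma integral_rpow_mul_log_mul_exp_neg_half_mul_rpow (hl : 0 < l) :
    ∫ x in Ioi (0 : ℝ), x ^ l * log x * exp (-(1 / 2) * x ^ l) =
      2 ^ (1 + 1 / l) * Gamma (1 + 1 / l) / l * ((log 2 + digamma (1 + 1 / l)) / l) := by
  rw [integral_rpow_mul_log_mul_exp_neg_mul_rpow hl (by linarith) (by norm_num), neg_div,
    one_div_two_rpow_neg, show (l + 1) / l = 1 + 1 / l by field_simp, one_div 2, log_inv]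
  ring

lemma integral_rpow_two_mul_mul_log_mul_exp_neg_half_mul_rpow (hl : 0 < l) :
    ∫ x in Ioi (0 : ℝ), x ^ (2 * l) * log x * exp (-(1 / 2) * x ^ l) =
      2 * (1 + 1 / l) * (2 ^ (1 + 1 / l) * Gamma (1 + 1 / l)) / l *
        ((log 2 + digamma (1 + 1 / l) + (1 + 1 / l)⁻¹) / l) := by
  have hs : 0 < 1 + 1 / l := by positivity
  rw [integral_rpow_mul_log_mul_exp_neg_mul_rpow hl (by linarith) (by norm_num), neg_div,
    one_div_two_rpow_neg, show (2 * l + 1) / l = 1 + 1 / l + 1 by field_simp; ring,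
    Gamma_add_one hs.ne', digamma_add_one hs, rpow_add_one two_ne_zero, one_div 2, log_inv]
  ring

end Moments

lemma dTheta2_mul_dSigma_mul_epdDensity {l x : ℝ} (hl : l ≠ 0) (hx : 0 < x) :
    dTheta2 l x * dSigma l x * epdDensity l x =
      ((2 : ℝ) ^ (1 + 1 / l) * Gamma (1 + 1 / l))⁻¹ *
        (-(l / 4) * (x ^ (2 * l) * log x * exp (-(1 / 2) * x ^ l))
          + 1 / 2 * (x ^ l * log x * exp (-(1 / 2) * x ^ l))
          + (log 2 + digamma (1 + 1 / l)) / (2 * l) * (x ^ l * exp (-(1 / 2) * x ^ l))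
          - (log 2 + digamma (1 + 1 / l)) / l ^ 2 * exp (-(1 / 2) * x ^ l)) := by
  rw [dTheta2, dSigma, epdDensity, abs_of_pos hx, two_mul, rpow_add hx]
  field_simp
  ring

lemma integral_dTheta2_mul_dSigma_mul_epdDensity {l : ℝ} (hl : 0 < l) :
    ∫ y, dTheta2 l y * dSigma l y * epdDensity l y =
      2 * (((2 : ℝ) ^ (1 + 1 / l) * Gamma (1 + 1 / l))⁻¹ *
        (-(l / 4) * (∫ x in Ioi (0 : ℝ), x ^ (2 * l) * log x * exp (-(1 / 2) * x ^ l))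
          + 1 / 2 * (∫ x in Ioi (0 : ℝ), x ^ l * log x * exp (-(1 / 2) * x ^ l))
          + (log 2 + digamma (1 + 1 / l)) / (2 * l) *
              (∫ x in Ioi (0 : ℝ), x ^ l * exp (-(1 / 2) * x ^ l))
          - (log 2 + digamma (1 + 1 / l)) / l ^ 2 *
              (∫ x in Ioi (0 : ℝ), exp (-(1 / 2) * x ^ l)))) := by
  have hhalf : (0 : ℝ) < 1 / 2 := by norm_num
  have hA := (integrableOn_rpow_mul_log_mul_exp_neg_mul_rpow (q := 2 * l) (by linarith) hl
    hhalf).const_mul (-(l / 4))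
  have hB := (integrableOn_rpow_mul_log_mul_exp_neg_mul_rpow (q := l) (by linarith) hl
    hhalf).const_mul (1 / 2)
  have hC := (integrableOn_rpow_mul_exp_neg_mul_rpow (s := l) (by linarith) hl
    hhalf).const_mul ((log 2 + digamma (1 + 1 / l)) / (2 * l))
  have hD := ((integrableOn_rpow_mul_exp_neg_mul_rpow (s := 0) (by norm_num) hl hhalf).congr_fun
    (fun x _ => by rw [rpow_zero, one_mul]) measurableSet_Ioi).const_mul
      ((log 2 + digamma (1 + 1 / l)) / l ^ 2)
  have hsymm : (fun y => dTheta2 l y * dSigma l y * epdDensity l y)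
      = fun y => dTheta2 l |y| * dSigma l |y| * epdDensity l |y| := by
    simp only [dTheta2, dSigma, epdDensity, abs_abs]
  rw [hsymm, integral_comp_abs (f := fun x => dTheta2 l x * dSigma l x * epdDensity l x),
    setIntegral_congr_fun measurableSet_Ioi
      fun x (hx : 0 < x) => dTheta2_mul_dSigma_mul_epdDensity hl.ne' hx,
    integral_const_mul, integral_sub ?hABC hD, integral_add ?hAB hC, integral_add hA hB,
    integral_const_mul, integral_const_mul, integral_const_mul, integral_const_mul]
  · exact hA.add hB
  · exact (hA.add hB).add hC

theorem dTheta2_dSigma_covariance (l : ℝ) (hl : 1 ≤ l) :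
    ∫ y : ℝ, dTheta2 l y * dSigma l y * epdDensity l y
      = -(1 + (Real.log 2 + digamma (1 + 1 / l))) / l := by
  have hl0 : 0 < l := by linarith
  have hK : 0 < (2 : ℝ) ^ (1 + 1 / l) * Gamma (1 + 1 / l) := by
    have := Gamma_pos_of_pos (show 0 < 1 + 1 / l by positivity)
    positivity
  rw [integral_dTheta2_mul_dSigma_mul_epdDensity hl0,
    integral_rpow_two_mul_mul_log_mul_exp_neg_half_mul_rpow hl0,
    integral_rpow_mul_log_mul_exp_neg_half_mul_rpow hl0,
    integral_rpow_mul_exp_neg_half_mul_rpow hl0, integral_exp_neg_half_mul_rpow hl0]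
  field_simp
  ring
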